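/- arXiv:2106.01432 — 3 statements merged into one kernel-verified Lean document; each statement's English description precedes it below -/
import Mathlib

section
/- Let t > 0 and let m̂: ℝ^d → [0,1] be measurable with plug-in classifier Ĉ(x) = 1{m̂(x) ≥ 1/2}. Suppose the margin condition P(|m(X) − 1/2| ≤ t) ≤ c6 t^α holds for constants c6 > 0 and α > 0. Then: (i) 2·E[ |m(X) − 1/2| · 1{|m(X) − 1/2| ≤ t, Ĉ(X) ≠ C(X)} ] ≤ 2 c6 t^{1+α}; and (ii) 2·E[ |m(X) − 1/2| · 1{|m(X) − 1/2| > t, Ĉ(X) ≠ C(X)} ] ≤ P(|m(X) − m̂(X)| > t). -/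
/-!
On the margin set `|m - 1/2| ≤ t` the integrand of (i) is at most `t`, so (i) is `t` times the
margin condition. Where the plug-in and Bayes classifiers disagree, `m̂(x)` lies on the other
side of `1/2` from `m(x)`, hence `|m - m̂| ≥ |m - 1/2|`; so the event in (ii) lies inside
`{|m - m̂| > t}`, and there the integrand is at most `1/2` because `m` takes values in `[0, 1]`.
-/

open MeasureTheory

theorem MeasureTheory.integral_mul_ite_le_mul_measureReal {α : Type*} [MeasurableSpace α]
    {μ : Measure α} [IsFiniteMeasure μ] {g : α → ℝ} {p : α → Prop} [DecidablePred p]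
    {s : Set α} {c : ℝ} (hc : 0 ≤ c) (hg : ∀ x, 0 ≤ g x) (hps : ∀ x, p x → x ∈ s)
    (hgc : ∀ x, p x → g x ≤ c) :
    ∫ x, g x * (if p x then 1 else 0) ∂μ ≤ c * μ.real s := by
  set T := toMeasurable μ s
  have hT : MeasurableSet T := measurableSet_toMeasurable μ s
  have hle : ∀ x, g x * (if p x then 1 else 0) ≤ T.indicator (fun _ => c) x := by
    intro x
    split_ifs with hp
    · rw [mul_one, Set.indicator_of_mem (subset_toMeasurable μ s (hps x hp))]
      exact hgc x hp
    · rw [mul_zero]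
      exact Set.indicator_nonneg (fun _ _ => hc) x
  calc ∫ x, g x * (if p x then 1 else 0) ∂μ
      ≤ ∫ x, T.indicator (fun _ => c) x ∂μ :=
        integral_mono_of_nonneg
          (.of_forall fun x => mul_nonneg (hg x) (by split_ifs <;> norm_num))
          ((integrable_const c).indicator hT) (.of_forall hle)
    _ = c * μ.real s := by
        rw [integral_indicator_const _ hT, smul_eq_mul, mul_comm, measureReal_def,
          measureReal_def, measure_toMeasurable]

theorem abs_sub_half_le_abs_sub_of_not_iff {a b : ℝ} (h : ¬(1 / 2 ≤ b ↔ 1 / 2 ≤ a)) :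
    |a - 1 / 2| ≤ |a - b| := by
  rcases le_or_gt (1 / 2) a with ha | ha
  · have hb : b < 1 / 2 := lt_of_not_ge fun hb => h (iff_of_true hb ha)
    rw [abs_of_nonneg (sub_nonneg.mpr ha), abs_of_pos (sub_pos.mpr (hb.trans_le ha))]
    linarith
  · have hb : 1 / 2 ≤ b := by_contra fun hb => h (iff_of_false hb ha.not_ge)
    rw [abs_of_neg (sub_neg.mpr ha), abs_of_neg (sub_neg.mpr (ha.trans_le hb))]
    linarith

theorem margin_decomposition_bounds_general
    {d : ℕ} (Pd : Measure (EuclideanSpace ℝ (Fin d))) [IsProbabilityMeasure Pd]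
    (m mhat : EuclideanSpace ℝ (Fin d) → ℝ)
    (hm01 : ∀ x, m x ∈ Set.Icc (0 : ℝ) 1)
    (t c6 α : ℝ) (ht : 0 < t)
    (hmargin : (Pd {x | |m x - 1 / 2| ≤ t}).toReal ≤ c6 * t ^ α) :
    2 * (∫ x, |m x - 1 / 2| *
          (if |m x - 1 / 2| ≤ t ∧
              decide ((1 : ℝ) / 2 ≤ mhat x) ≠ decide ((1 : ℝ) / 2 ≤ m x)
            then (1 : ℝ) else 0) ∂Pd) ≤ 2 * c6 * t ^ (1 + α) ∧
    2 * (∫ x, |m x - 1 / 2| *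
          (if t < |m x - 1 / 2| ∧
              decide ((1 : ℝ) / 2 ≤ mhat x) ≠ decide ((1 : ℝ) / 2 ≤ m x)
            then (1 : ℝ) else 0) ∂Pd) ≤
      (Pd {x | t < |m x - mhat x|}).toReal := by
  have habs_le_half x : |m x - 1 / 2| ≤ 1 / 2 :=
    abs_le.mpr ⟨by linarith [(hm01 x).1], by linarith [(hm01 x).2]⟩
  have hdisagree_far x (h : decide ((1 : ℝ) / 2 ≤ mhat x) ≠ decide ((1 : ℝ) / 2 ≤ m x)) :
      |m x - 1 / 2| ≤ |m x - mhat x| :=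
    abs_sub_half_le_abs_sub_of_not_iff fun hiff => h (decide_eq_decide.mpr hiff)
  constructor
  · calc _ ≤ 2 * (t * Pd.real {x | |m x - 1 / 2| ≤ t}) := by
          gcongr
          exact integral_mul_ite_le_mul_measureReal ht.le (fun _ => abs_nonneg _)
            (fun _ h => h.1) (fun _ h => h.1)
      _ ≤ 2 * (t * (c6 * t ^ α)) := by gcongr; exact hmargin
      _ = 2 * c6 * t ^ (1 + α) := by rw [Real.rpow_add ht, Real.rpow_one]; ring
  · calc _ ≤ 2 * (1 / 2 * Pd.real {x | t < |m x - mhat x|}) := by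
          gcongr
          exact integral_mul_ite_le_mul_measureReal (by norm_num) (fun _ => abs_nonneg _)
            (fun x h => h.1.trans_le (hdisagree_far x h.2)) (fun x _ => habs_le_half x)
      _ = Pd.real {x | t < |m x - mhat x|} := by ring

/-- **Margin decomposition bounds for plug-in classifiers.**
Let `P` be a probability measure on `ℝ^d`, `m : ℝ^d → [0,1]` measurable with Bayes
classifier `C(x) = 1{m(x) ≥ 1/2}`, and let `m̂ : ℝ^d → [0,1]` be measurable with plug-in
classifier `Ĉ(x) = 1{m̂(x) ≥ 1/2}`.  Fix `t > 0` and assume the margin condition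
`P(|m(X) − 1/2| ≤ t) ≤ c₆ t^α` with `c₆ > 0`, `α > 0`. Then
(i)  `2 E[|m(X) − 1/2| · 1{|m(X) − 1/2| ≤ t, Ĉ(X) ≠ C(X)}] ≤ 2 c₆ t^{1+α}`, and
(ii) `2 E[|m(X) − 1/2| · 1{|m(X) − 1/2| > t, Ĉ(X) ≠ C(X)}] ≤ P(|m(X) − m̂(X)| > t)`. -/
theorem margin_decomposition_bounds
    {d : ℕ} (Pd : Measure (EuclideanSpace ℝ (Fin d))) [IsProbabilityMeasure Pd]
    (m mhat : EuclideanSpace ℝ (Fin d) → ℝ)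
    (hm_meas : Measurable m) (hmhat_meas : Measurable mhat)
    (hm01 : ∀ x, m x ∈ Set.Icc (0 : ℝ) 1) (hmhat01 : ∀ x, mhat x ∈ Set.Icc (0 : ℝ) 1)
    (t c6 α : ℝ) (ht : 0 < t) (hc6 : 0 < c6) (hα : 0 < α)
    (hmargin : (Pd {x | |m x - 1 / 2| ≤ t}).toReal ≤ c6 * t ^ α) :
    2 * (∫ x, |m x - 1 / 2| *
          (if |m x - 1 / 2| ≤ t ∧
              decide ((1 : ℝ) / 2 ≤ mhat x) ≠ decide ((1 : ℝ) / 2 ≤ m x)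
            then (1 : ℝ) else 0) ∂Pd) ≤ 2 * c6 * t ^ (1 + α) ∧
    2 * (∫ x, |m x - 1 / 2| *
          (if t < |m x - 1 / 2| ∧
              decide ((1 : ℝ) / 2 ≤ mhat x) ≠ decide ((1 : ℝ) / 2 ≤ m x)
            then (1 : ℝ) else 0) ∂Pd) ≤
      (Pd {x | t < |m x - mhat x|}).toReal :=
  margin_decomposition_bounds_general Pd m mhat hm01 t c6 α ht hmargin
end

section
/- Let μ be a Borel probability measure on ℝ^d whose support is contained in [0,1]^d, let h > 0, and suppose [0,1]^d ⊆ ∪_{i=1}^{M} B(z_i, h/2) for points z_1,…,z_M ∈ ℝ^d. Then for every ñ > 0, ∫_{[0,1]^d} exp(−ñ · μ(B(x, h))) dμ(x) ≤ M / (e·ñ). -/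
/-!
If `x ∈ B(zᵢ, h/2)` then `B(zᵢ, h/2) ⊆ B(x, h)`, so on the piece `B(zᵢ, h/2)` of the cover the
integrand is at most `exp (-ñ cᵢ)` with `cᵢ = μ(B(zᵢ, h/2))`, and the piece contributes at most
`cᵢ exp (-ñ cᵢ) ≤ 1 / (e ñ)` because `a e^{-a} ≤ e^{-1}`. Summing over the `M` pieces gives the bound.
-/

open MeasureTheory Metric Real

theorem exp_neg_mul_mul_le_inv_exp_one_mul {t : ℝ} (ht : 0 < t) (c : ℝ) :
    exp (-t * c) * c ≤ (exp 1 * t)⁻¹ :=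
  calc exp (-t * c) * c = t * c * exp (-(t * c)) / t := by field_simp
    _ ≤ exp (-1) / t := by gcongr; exact mul_exp_neg_le_exp_neg_one _
    _ = (exp 1 * t)⁻¹ := by rw [exp_neg, div_eq_mul_inv, mul_inv]

theorem setIntegral_le_sum_setIntegral_of_subset_iUnion {α ι : Type*} [MeasurableSpace α]
    [Fintype ι] {μ : Measure α} {f : α → ℝ} (hf₀ : 0 ≤ f) (hf : Integrable f μ) {s : Set α}
    {t : ι → Set α} (hst : s ⊆ ⋃ i, t i) :
    ∫ x in s, f x ∂μ ≤ ∑ i, ∫ x in t i, f x ∂μ := by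
  have hle : μ.restrict s ≤ ∑ i, μ.restrict (t i) := by
    rw [← Measure.sum_fintype]
    exact (Measure.restrict_mono hst le_rfl).trans Measure.restrict_iUnion_le
  rw [← integral_finsetSum_measure fun i _ => hf.restrict]
  exact integral_mono_measure hle (.of_forall hf₀)
    (integrable_finsetSum_measure.2 fun i _ => hf.restrict)

section

variable {X : Type*} [PseudoMetricSpace X] [MeasurableSpace X]

theorem measurable_measure_closedBall [OpensMeasurableSpace X] [SecondCountableTopology X]
    (μ : Measure X) [SFinite μ] (r : ℝ) : Measurable fun x => μ (closedBall x r) := by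
  have hball : ∀ x, closedBall x r = Prod.mk x ⁻¹' {p : X × X | dist p.2 p.1 ≤ r} := fun _ => rfl
  simp_rw [hball]
  exact measurable_measure_prodMk_left (measurableSet_le (by fun_prop) measurable_const)

theorem integrable_exp_neg_mul_measureReal_closedBall [OpensMeasurableSpace X]
    [SecondCountableTopology X] (μ : Measure X) [IsFiniteMeasure μ] (r : ℝ) {t : ℝ}
    (ht : 0 ≤ t) : Integrable (fun x => exp (-t * μ.real (closedBall x r))) μ := by
  refine .of_bound ?_ 1 (.of_forall fun x => ?_)
  · exact (measurable_exp.comp (measurable_const.mul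
      (measurable_measure_closedBall μ r).ennreal_toReal)).aestronglyMeasurable
  · rw [norm_of_nonneg (exp_pos _).le, exp_le_one_iff, neg_mul, neg_nonpos]
    positivity

theorem setIntegral_closedBall_half_exp_neg_mul_measureReal_closedBall_le (μ : Measure X)
    [IsFiniteMeasure μ] (z : X) (r : ℝ) {t : ℝ} (ht : 0 < t) :
    ∫ x in closedBall z (r / 2), exp (-t * μ.real (closedBall x r)) ∂μ ≤ (exp 1 * t)⁻¹ := by
  set c := μ.real (closedBall z (r / 2))
  have hbound : ∀ x ∈ closedBall z (r / 2),
      ‖exp (-t * μ.real (closedBall x r))‖ ≤ exp (-t * c) := by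
    intro x hx
    have hsub : closedBall z (r / 2) ⊆ closedBall x r :=
      closedBall_subset_closedBall' (by rw [mem_closedBall'] at hx; linarith)
    rw [norm_of_nonneg (exp_pos _).le, exp_le_exp, neg_mul, neg_mul, neg_le_neg_iff]
    exact mul_le_mul_of_nonneg_left (measureReal_mono hsub) ht.le
  calc ∫ x in closedBall z (r / 2), exp (-t * μ.real (closedBall x r)) ∂μ
      ≤ ‖∫ x in closedBall z (r / 2), exp (-t * μ.real (closedBall x r)) ∂μ‖ := le_norm_self _
    _ ≤ exp (-t * c) * c := norm_setIntegral_le_of_norm_le_const (measure_lt_top _ _) hbound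
    _ ≤ (exp 1 * t)⁻¹ := exp_neg_mul_mul_le_inv_exp_one_mul ht c

end

theorem covering_exponential_integral_bound_general
    {d M : ℕ} (μ : Measure (EuclideanSpace ℝ (Fin d))) [IsProbabilityMeasure μ]
    (h : ℝ) (z : Fin M → EuclideanSpace ℝ (Fin d))
    (hcover : {x : EuclideanSpace ℝ (Fin d) | ∀ i, x i ∈ Set.Icc (0 : ℝ) 1} ⊆
      ⋃ i, closedBall (z i) (h / 2))
    (ntil : ℝ) (hn : 0 < ntil) :
    ∫ x in {x : EuclideanSpace ℝ (Fin d) | ∀ i, x i ∈ Set.Icc (0 : ℝ) 1},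
        Real.exp (-ntil * (μ (closedBall x h)).toReal) ∂μ ≤
      M / (Real.exp 1 * ntil) :=
  calc _ ≤ ∑ i, ∫ x in closedBall (z i) (h / 2), exp (-ntil * μ.real (closedBall x h)) ∂μ :=
        setIntegral_le_sum_setIntegral_of_subset_iUnion (fun _ => (exp_pos _).le)
          (integrable_exp_neg_mul_measureReal_closedBall μ h hn.le) hcover
    _ ≤ ∑ _i : Fin M, (exp 1 * ntil)⁻¹ := Finset.sum_le_sum fun i _ =>
        setIntegral_closedBall_half_exp_neg_mul_measureReal_closedBall_le μ (z i) h hn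
    _ = M / (exp 1 * ntil) := by simp [div_eq_mul_inv]

/-- **Covering lemma for exponential ball-mass integrals.**
Let `μ` be a Borel probability measure on `ℝ^d` supported in `[0,1]^d`, let `h > 0`, and
suppose `[0,1]^d ⊆ ⋃_{i=1}^M B(z_i, h/2)` for points `z₁,…,z_M`.  Then for every
`ñ > 0`, `∫_{[0,1]^d} exp(−ñ · μ(B(x,h))) dμ(x) ≤ M / (e · ñ)`. -/
theorem covering_exponential_integral_bound
    {d M : ℕ} (μ : Measure (EuclideanSpace ℝ (Fin d))) [IsProbabilityMeasure μ]
    (hsupp : μ {x : EuclideanSpace ℝ (Fin d) | ∀ i, x i ∈ Set.Icc (0 : ℝ) 1}ᶜ = 0)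
    (h : ℝ) (hh : 0 < h) (z : Fin M → EuclideanSpace ℝ (Fin d))
    (hcover : {x : EuclideanSpace ℝ (Fin d) | ∀ i, x i ∈ Set.Icc (0 : ℝ) 1} ⊆
      ⋃ i, closedBall (z i) (h / 2))
    (ntil : ℝ) (hn : 0 < ntil) :
    ∫ x in {x : EuclideanSpace ℝ (Fin d) | ∀ i, x i ∈ Set.Icc (0 : ℝ) 1},
        Real.exp (-ntil * (μ (closedBall x h)).toReal) ∂μ ≤
      M / (Real.exp 1 * ntil) :=
  covering_exponential_integral_bound_general μ h z hcover ntil hn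
end

section
/- Let δ ∈ (0, 1/4], Δ ≥ δ, and ε ≥ 0. On a probability space carrying random variables X^u (in ℝ^d), X̃ (in ℝ^d) and Ỹ ∈ {0,1}, suppose: (i) P(Ỹ = 1 | X̃, X^u) = m(X^u) almost surely; (ii) almost surely min{1 − m̂(X^u), m̂(X^u)} ≤ δ; (iii) |m̂(x) − m(x)| ≤ ε for every x with min{1 − m̂(x), m̂(x)} ≤ Δ. Define the pseudo-label Ŷ = 1{m̂(X^u) ≥ 1/2}. Then almost surely P(Ŷ = 1, Ỹ = 0 | X̃, X^u) ≤ δ + ε and P(Ŷ = 0, Ỹ = 1 | X̃, X^u) ≤ δ + ε, and consequently E(|Ŷ − Ỹ| | X̃) ≤ 2δ + 2ε almost surely. -/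
open MeasureTheory ProbabilityTheory

/-!
On the high-confidence event, `Ŷ = 1` forces `m̂(X^u) ≥ 1 - δ`, hence `m(X^u) ≥ 1 - δ - ε` by
the accuracy of `m̂`, and symmetrically `Ŷ = 0` forces `m(X^u) ≤ δ + ε`. Since the event
`{Ŷ = 1}` is `σ(X̃, X^u)`-measurable, it factors out of the conditional expectation:
`P(Ŷ = 1, Ỹ = 0 ∣ X̃, X^u) = 1{Ŷ = 1} (1 - m(X^u)) ≤ δ + ε`, and likewise for the other error.
Finally `|Ŷ - Ỹ|` is the sum of the two error indicators, and the tower property passes the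
bound `2δ + 2ε` down to `σ(X̃)`.
-/

section CondExpIndicator

variable {Ω : Type*} {m m₀ : MeasurableSpace Ω} {μ : Measure Ω} [IsFiniteMeasure μ] {A B : Set Ω}

lemma condExp_indicator_inter_ae_eq (hA : MeasurableSet[m] A) (hB : MeasurableSet B) :
    μ[(A ∩ B).indicator (1 : Ω → ℝ) | m] =ᵐ[μ] A.indicator (μ[B.indicator 1 | m]) := by
  rw [← Set.indicator_indicator]
  exact condExp_indicator ((integrable_const 1).indicator hB) hA

lemma condExp_indicator_compl_ae_eq (hm : m ≤ m₀) (hB : MeasurableSet B) :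
    μ[Bᶜ.indicator (1 : Ω → ℝ) | m] =ᵐ[μ] 1 - μ[B.indicator 1 | m] := by
  have hone : Integrable (1 : Ω → ℝ) μ := integrable_const 1
  filter_upwards [condExp_sub hone (hone.indicator hB) m] with ω hω
  rw [Set.indicator_compl, hω, show μ[(1 : Ω → ℝ) | m] = 1 from condExp_const hm 1]

lemma ae_condExp_indicator_inter_le (hA : MeasurableSet[m] A) (hB : MeasurableSet B) {c : ℝ}
    (hc : 0 ≤ c) (h : ∀ᵐ ω ∂μ, ω ∈ A → μ[B.indicator (1 : Ω → ℝ) | m] ω ≤ c) :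
    ∀ᵐ ω ∂μ, μ[(A ∩ B).indicator 1 | m] ω ≤ c := by
  filter_upwards [condExp_indicator_inter_ae_eq hA hB, h] with ω hω hωA
  rw [hω]
  exact Set.indicator_apply_le' hωA fun _ => hc

lemma ae_condExp_misclassification_le (hm : m ≤ m₀) (hA : MeasurableSet[m] A)
    (hB : MeasurableSet B) {c : ℝ} (hc : 0 ≤ c)
    (h : ∀ᵐ ω ∂μ, (ω ∈ A → 1 - μ[B.indicator (1 : Ω → ℝ) | m] ω ≤ c) ∧
      (ω ∉ A → μ[B.indicator (1 : Ω → ℝ) | m] ω ≤ c)) :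
    (∀ᵐ ω ∂μ, μ[(A ∩ Bᶜ).indicator 1 | m] ω ≤ c) ∧
      (∀ᵐ ω ∂μ, μ[(Aᶜ ∩ B).indicator 1 | m] ω ≤ c) := by
  refine ⟨ae_condExp_indicator_inter_le hA hB.compl hc ?_,
    ae_condExp_indicator_inter_le hA.compl hB hc ?_⟩
  · filter_upwards [condExp_indicator_compl_ae_eq hm hB, h] with ω hBc hω hωA
    rw [hBc]
    exact hω.1 hωA
  · filter_upwards [h] with ω hω using hω.2

lemma ae_condExp_le_of_condExp_le {m₁ m₂ : MeasurableSpace Ω}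
    (h₁₂ : m₁ ≤ m₂) (h₂ : m₂ ≤ m₀) {f : Ω → ℝ} {c : ℝ} (hf : ∀ᵐ ω ∂μ, μ[f | m₂] ω ≤ c) :
    ∀ᵐ ω ∂μ, μ[f | m₁] ω ≤ c := by
  have hmono := condExp_mono (m := m₁) (g := fun _ => c) integrable_condExp (integrable_const c) hf
  rw [condExp_const (h₁₂.trans h₂)] at hmono
  filter_upwards [condExp_condExp_of_le (f := f) h₁₂ h₂, hmono] with ω htower hω
  rwa [← htower]

lemma ae_condExp_indicator_add_le {m' : MeasurableSpace Ω} (hm' : m' ≤ m) (hm : m ≤ m₀)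
    (hA : MeasurableSet[m₀] A) (hB : MeasurableSet[m₀] B) {a b : ℝ}
    (hAa : ∀ᵐ ω ∂μ, μ[A.indicator (1 : Ω → ℝ) | m] ω ≤ a)
    (hBb : ∀ᵐ ω ∂μ, μ[B.indicator (1 : Ω → ℝ) | m] ω ≤ b) :
    ∀ᵐ ω ∂μ, μ[A.indicator 1 + B.indicator 1 | m'] ω ≤ a + b := by
  have hone : Integrable (1 : Ω → ℝ) μ := integrable_const 1
  refine ae_condExp_le_of_condExp_le hm' hm ?_
  filter_upwards [condExp_add (hone.indicator hA) (hone.indicator hB) m, hAa, hBb]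
    with ω hadd hωA hωB
  rw [hadd, Pi.add_apply]
  exact add_le_add hωA hωB

end CondExpIndicator

lemma abs_indicator_one_sub_indicator_one {Ω : Type*} (A B : Set Ω) (ω : Ω) :
    |A.indicator (1 : Ω → ℝ) ω - B.indicator 1 ω| =
      (A ∩ Bᶜ).indicator 1 ω + (Aᶜ ∩ B).indicator 1 ω := by
  by_cases hA : ω ∈ A <;> by_cases hB : ω ∈ B <;> simp [hA, hB]

lemma one_sub_le_and_le_of_confident {p q δ ε : ℝ} (hδ : δ < 1 / 2)
    (hp : min (1 - p) p ≤ δ) (hpq : |p - q| ≤ ε) :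
    (1 / 2 ≤ p → 1 - q ≤ δ + ε) ∧ (¬ 1 / 2 ≤ p → q ≤ δ + ε) := by
  obtain ⟨hqp, hpq⟩ := abs_le.mp hpq
  constructor
  · intro hhalf
    rcases min_le_iff.mp hp with hp | hp <;> linarith
  · intro hhalf
    rcases min_le_iff.mp hp with hp | hp <;> linarith [not_le.mp hhalf]

theorem pseudo_label_conditional_error_bound_general
    {d : ℕ} {Ω : Type*} [MeasurableSpace Ω] (μ : Measure Ω) [IsProbabilityMeasure μ]
    (m mhat : EuclideanSpace ℝ (Fin d) → ℝ)
    (hmhat_meas : Measurable mhat)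
    (δ Δ ε : ℝ) (hδ : δ ∈ Set.Ioc (0 : ℝ) (1 / 4)) (hΔ : δ ≤ Δ) (hε : 0 ≤ ε)
    (Xu Xt : Ω → EuclideanSpace ℝ (Fin d)) (Yt : Ω → Bool)
    (hXu : Measurable Xu) (hXt : Measurable Xt) (hYt : Measurable Yt)
    -- (i)  P(Ỹ = 1 ∣ X̃, X^u) = m(X^u) almost surely
    (hcond : μ[(fun ω => if Yt ω then (1 : ℝ) else 0) |
        MeasurableSpace.comap (fun ω => (Xt ω, Xu ω)) inferInstance]
      =ᵐ[μ] fun ω => m (Xu ω))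
    -- (ii) X^u is a high-confidence point at level δ, almost surely
    (hhigh : ∀ᵐ ω ∂μ, min (1 - mhat (Xu ω)) (mhat (Xu ω)) ≤ δ)
    -- (iii) the initial estimate is ε-accurate on the Δ-high-confidence region
    (hacc : ∀ x, min (1 - mhat x) (mhat x) ≤ Δ → |mhat x - m x| ≤ ε) :
    (∀ᵐ ω ∂μ,
      (μ[(fun ω' => if (1 : ℝ) / 2 ≤ mhat (Xu ω') ∧ Yt ω' = false then (1 : ℝ) else 0) |
          MeasurableSpace.comap (fun ω' => (Xt ω', Xu ω')) inferInstance]) ω ≤ δ + ε) ∧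
    (∀ᵐ ω ∂μ,
      (μ[(fun ω' => if ¬ (1 : ℝ) / 2 ≤ mhat (Xu ω') ∧ Yt ω' = true then (1 : ℝ) else 0) |
          MeasurableSpace.comap (fun ω' => (Xt ω', Xu ω')) inferInstance]) ω ≤ δ + ε) ∧
    (∀ᵐ ω ∂μ,
      (μ[(fun ω' => |(if (1 : ℝ) / 2 ≤ mhat (Xu ω') then (1 : ℝ) else 0) -
            (if Yt ω' then (1 : ℝ) else 0)|) |
          MeasurableSpace.comap Xt inferInstance]) ω ≤ 2 * δ + 2 * ε) := by
  set A := {ω | (1 : ℝ) / 2 ≤ mhat (Xu ω)}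
  set B := {ω | Yt ω = true}
  have hG := (hXt.prodMk hXu).comap_le
  have hA : MeasurableSet[MeasurableSpace.comap (fun ω => (Xt ω, Xu ω)) inferInstance] A :=
    measurableSet_le measurable_const (hmhat_meas.comp (comap_measurable _).snd)
  have hB : MeasurableSet B := hYt (measurableSet_singleton true)
  have hY : μ[B.indicator 1 | MeasurableSpace.comap (fun ω => (Xt ω, Xu ω)) inferInstance]
      =ᵐ[μ] fun ω => m (Xu ω) := by
    convert hcond using 2
    ext ω
    simp [B, Set.indicator_apply]
  have hδ_half : δ < 1 / 2 := by linarith [hδ.2]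
  have hδε : 0 ≤ δ + ε := by linarith [hδ.1]
  obtain ⟨h₁, h₂⟩ := ae_condExp_misclassification_le (μ := μ) hG hA hB hδε <| by
    filter_upwards [hY, hhigh] with ω hYω hω
    rw [hYω]
    exact one_sub_le_and_le_of_confident hδ_half hω (hacc _ (hω.trans hΔ))
  have e₁ : (fun ω => if (1 : ℝ) / 2 ≤ mhat (Xu ω) ∧ Yt ω = false then (1 : ℝ) else 0) =
      (A ∩ Bᶜ).indicator 1 := by
    ext ω; simp [A, B, Set.indicator_apply]
  have e₂ : (fun ω => if ¬ (1 : ℝ) / 2 ≤ mhat (Xu ω) ∧ Yt ω = true then (1 : ℝ) else 0) =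
      (Aᶜ ∩ B).indicator 1 := by
    ext ω; simp [A, B, Set.indicator_apply]
  have e₃ : (fun ω => |(if (1 : ℝ) / 2 ≤ mhat (Xu ω) then (1 : ℝ) else 0) -
      (if Yt ω then (1 : ℝ) else 0)|) = (A ∩ Bᶜ).indicator 1 + (Aᶜ ∩ B).indicator 1 := by
    ext ω
    rw [Pi.add_apply, ← abs_indicator_one_sub_indicator_one]
    simp [A, B, Set.indicator_apply]
  refine ⟨e₁ ▸ h₁, e₂ ▸ h₂, e₃ ▸ ?_⟩
  filter_upwards [ae_condExp_indicator_add_le (comap_measurable _).fst.comap_le hG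
    ((hG _ hA).inter hB.compl) ((hG _ hA).compl.inter hB) h₁ h₂] with ω hω
  linarith

/-- **Pseudo-label error bound for high-confidence points.**
Let `δ ∈ (0, 1/4]`, `Δ ≥ δ`, `ε ≥ 0`.  On a probability space carrying random variables
`X^u, X̃` (in `ℝ^d`) and `Ỹ ∈ {0,1}`, suppose (i) `P(Ỹ = 1 ∣ X̃, X^u) = m(X^u)` a.s.,
(ii) a.s. `min{1 − m̂(X^u), m̂(X^u)} ≤ δ`, and (iii) `|m̂(x) − m(x)| ≤ ε` whenever
`min{1 − m̂(x), m̂(x)} ≤ Δ`.  With the pseudo-label `Ŷ = 1{m̂(X^u) ≥ 1/2}`, almost surely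
`P(Ŷ = 1, Ỹ = 0 ∣ X̃, X^u) ≤ δ + ε` and `P(Ŷ = 0, Ỹ = 1 ∣ X̃, X^u) ≤ δ + ε`, and
consequently `E(|Ŷ − Ỹ| ∣ X̃) ≤ 2δ + 2ε` almost surely. -/
theorem pseudo_label_conditional_error_bound
    {d : ℕ} {Ω : Type*} [MeasurableSpace Ω] (μ : Measure Ω) [IsProbabilityMeasure μ]
    (m mhat : EuclideanSpace ℝ (Fin d) → ℝ)
    (hm_meas : Measurable m) (hmhat_meas : Measurable mhat)
    (hm01 : ∀ x, m x ∈ Set.Icc (0 : ℝ) 1) (hmhat01 : ∀ x, mhat x ∈ Set.Icc (0 : ℝ) 1)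
    (δ Δ ε : ℝ) (hδ : δ ∈ Set.Ioc (0 : ℝ) (1 / 4)) (hΔ : δ ≤ Δ) (hε : 0 ≤ ε)
    (Xu Xt : Ω → EuclideanSpace ℝ (Fin d)) (Yt : Ω → Bool)
    (hXu : Measurable Xu) (hXt : Measurable Xt) (hYt : Measurable Yt)
    -- (i)  P(Ỹ = 1 ∣ X̃, X^u) = m(X^u) almost surely
    (hcond : μ[(fun ω => if Yt ω then (1 : ℝ) else 0) |
        MeasurableSpace.comap (fun ω => (Xt ω, Xu ω)) inferInstance]
      =ᵐ[μ] fun ω => m (Xu ω))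
    -- (ii) X^u is a high-confidence point at level δ, almost surely
    (hhigh : ∀ᵐ ω ∂μ, min (1 - mhat (Xu ω)) (mhat (Xu ω)) ≤ δ)
    -- (iii) the initial estimate is ε-accurate on the Δ-high-confidence region
    (hacc : ∀ x, min (1 - mhat x) (mhat x) ≤ Δ → |mhat x - m x| ≤ ε) :
    (∀ᵐ ω ∂μ,
      (μ[(fun ω' => if (1 : ℝ) / 2 ≤ mhat (Xu ω') ∧ Yt ω' = false then (1 : ℝ) else 0) |
          MeasurableSpace.comap (fun ω' => (Xt ω', Xu ω')) inferInstance]) ω ≤ δ + ε) ∧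
    (∀ᵐ ω ∂μ,
      (μ[(fun ω' => if ¬ (1 : ℝ) / 2 ≤ mhat (Xu ω') ∧ Yt ω' = true then (1 : ℝ) else 0) |
          MeasurableSpace.comap (fun ω' => (Xt ω', Xu ω')) inferInstance]) ω ≤ δ + ε) ∧
    (∀ᵐ ω ∂μ,
      (μ[(fun ω' => |(if (1 : ℝ) / 2 ≤ mhat (Xu ω') then (1 : ℝ) else 0) -
            (if Yt ω' then (1 : ℝ) else 0)|) |
          MeasurableSpace.comap Xt inferInstance]) ω ≤ 2 * δ + 2 * ε) :=
  pseudo_label_conditional_error_bound_general μ m mhat hmhat_meas δ Δ ε hδ hΔ hε Xu Xt Yt hXu hXt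
    hYt hcond hhigh hacc
end
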